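/- Let 1 < r < 2 and suppose there exists σ > n(1/r − 1/2) such that Σ_{ν ∈ ℕ₀ⁿ} |ν|^{2σ} ∫_{ℝⁿ} |m(x,ν)|² φ_ν(x)² dx < ∞. Then the Hermite pseudo-multiplier T_m belongs to the Schatten class S_r(L²(ℝⁿ)). -/

import Mathlib

open MeasureTheory Filter
open scoped BigOperators ENNReal

noncomputable section

/-- Physicists' Hermite polynomials: `H₀ = 1`, `H_{k+1} = 2 X H_k - H_k'`. -/
def physHermite : ℕ → Polynomial ℝ
  | 0 => 1
  | k + 1 => 2 * Polynomial.X * physHermite k - Polynomial.derivative (physHermite k)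

/-- One-dimensional normalized Hermite functions. -/
def hermiteFun (k : ℕ) (x : ℝ) : ℝ :=
  ((2 : ℝ) ^ k * (Nat.factorial k : ℝ) * Real.sqrt Real.pi) ^ (-(1 : ℝ) / 2) *
    (physHermite k).eval x * Real.exp (-x ^ 2 / 2)

/-- Product of one-dimensional Hermite functions for a multi-index, plain pi-type version. -/
def hermiteProd (n : ℕ) (ν : Fin n → ℕ) (x : Fin n → ℝ) : ℝ :=
  ∏ j, hermiteFun (ν j) (x j)

/-- `n`-dimensional Hermite function `φ_ν` on `ℝⁿ`. -/
def hermiteFunN (n : ℕ) (ν : Fin n → ℕ) (x : EuclideanSpace ℝ (Fin n)) : ℝ :=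
  ∏ j, hermiteFun (ν j) (x j)

/-- `L²(ℝⁿ)` with complex scalars. -/
abbrev L2Rn (n : ℕ) :=
  MeasureTheory.Lp ℂ 2 (volume : Measure (EuclideanSpace ℝ (Fin n)))

/-- `k`-th singular value (approximation number) of an operator on a Hilbert space:
the distance of `T` to operators of rank at most `k`. -/
def singularValue {H : Type*} [NormedAddCommGroup H] [InnerProductSpace ℂ H]
    (T : H →L[ℂ] H) (k : ℕ) : ℝ :=
  sInf {c : ℝ | ∃ F : H →L[ℂ] H,
    (∃ v : Fin k → H, LinearMap.range (F : H →ₗ[ℂ] H) ≤ Submodule.span ℂ (Set.range v)) ∧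
      c = ‖T - F‖}

/-- Schatten–von Neumann class of order `r`: the singular values are `r`-summable. -/
def MemSchatten {H : Type*} [NormedAddCommGroup H] [InnerProductSpace ℂ H]
    (r : ℝ) (T : H →L[ℂ] H) : Prop :=
  Summable fun k => singularValue T k ^ r

/-- Hilbert–Schmidt operators: `∑ ‖T e_ν‖² < ∞` for every orthonormal basis. -/
def IsHilbertSchmidt {H : Type*} [NormedAddCommGroup H] [InnerProductSpace ℂ H]
    (T : H →L[ℂ] H) : Prop :=
  ∀ (ι : Type) (b : HilbertBasis ι ℂ H), Summable fun i => ‖T (b i)‖ ^ 2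

end

/-!
Write `c_ν = ‖T φ_ν‖² = ∫ |m(x,ν)|² φ_ν(x)² dx` and `s_k` for the approximation numbers of `T`.
Subtracting from `T` its (rank `≤ Nⁿ`) restriction to the `φ_ν` with `|ν| < N` leaves an
operator whose Hilbert–Schmidt norm squared is at most `N^{-2σ} ∑ |ν|^{2σ} c_ν`, and a
Hilbert–Schmidt operator `A` satisfies `(j + 1) s_j(A)² ≤ ‖A‖²_HS`: greedily peel off rank-one
pieces `x ↦ ⟪f, x⟫ A f`, each of which lowers `‖A‖²_HS` by `‖A f‖²`. Taking `N = 2^q` and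
`j = 2^{nq}` gives `s_{2·2^{nq}}(T)² ≲ 2^{-(2σ+n)q}`, and Schlömilch's condensation test turns
this into `∑ s_k^r < ∞` as soon as `2^n · 2^{-(2σ+n)r/2} < 1`, i.e. `σ > n(1/r - 1/2)`.
-/

open scoped InnerProductSpace

section SingularValue

variable {H : Type*} [NormedAddCommGroup H] [InnerProductSpace ℂ H]

def RankLE (k : ℕ) (F : H →L[ℂ] H) : Prop :=
  ∃ v : Fin k → H, LinearMap.range (F : H →ₗ[ℂ] H) ≤ Submodule.span ℂ (Set.range v)

lemma rankLE_zero (k : ℕ) : RankLE k (0 : H →L[ℂ] H) :=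
  ⟨0, by simp⟩

lemma RankLE.mono {k l : ℕ} {F : H →L[ℂ] H} (h : RankLE k F) (hkl : k ≤ l) : RankLE l F := by
  obtain ⟨v, hv⟩ := h
  refine ⟨fun i => if hi : (i : ℕ) < k then v ⟨i, hi⟩ else 0, hv.trans (Submodule.span_mono ?_)⟩
  rintro _ ⟨a, rfl⟩
  exact ⟨Fin.castLE hkl a, by simp⟩

lemma RankLE.add {k l : ℕ} {F G : H →L[ℂ] H} (hF : RankLE k F) (hG : RankLE l G) :
    RankLE (k + l) (F + G) := by
  obtain ⟨v, hv⟩ := hF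
  obtain ⟨w, hw⟩ := hG
  refine ⟨Fin.append v w, ?_⟩
  rintro _ ⟨y, rfl⟩
  refine Submodule.add_mem _ (Submodule.span_mono ?_ (hv ⟨y, rfl⟩))
    (Submodule.span_mono ?_ (hw ⟨y, rfl⟩))
  · rintro _ ⟨a, rfl⟩
    exact ⟨Fin.castAdd l a, Fin.append_left v w a⟩
  · rintro _ ⟨a, rfl⟩
    exact ⟨Fin.natAdd k a, Fin.append_right v w a⟩

lemma rankLE_one_smulRight (f g : H) : RankLE 1 ((innerSL ℂ f).smulRight g) := by
  refine ⟨fun _ => g, ?_⟩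
  rintro _ ⟨y, rfl⟩
  exact Submodule.smul_mem _ _ (Submodule.subset_span ⟨0, rfl⟩)

lemma rankLE_card_sum {α : Type*} (s : Finset α) (F : α → H →L[ℂ] H)
    (hF : ∀ a ∈ s, RankLE 1 (F a)) : RankLE s.card (∑ a ∈ s, F a) := by
  induction s using Finset.cons_induction with
  | empty => exact rankLE_zero 0
  | cons a s ha ih =>
    rw [Finset.sum_cons, Finset.card_cons, add_comm]
    exact (hF a (Finset.mem_cons_self a s)).add (ih fun b hb => hF b (Finset.mem_cons_of_mem hb))

lemma singularValue_nonneg (T : H →L[ℂ] H) (k : ℕ) : 0 ≤ singularValue T k :=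
  le_csInf ⟨_, 0, rankLE_zero k, rfl⟩ (by rintro _ ⟨F, -, rfl⟩; exact norm_nonneg _)

lemma singularValue_le_norm_sub {T F : H →L[ℂ] H} {k : ℕ} (hF : RankLE k F) :
    singularValue T k ≤ ‖T - F‖ :=
  csInf_le ⟨0, by rintro _ ⟨G, -, rfl⟩; exact norm_nonneg _⟩ ⟨F, hF, rfl⟩

lemma singularValue_le_norm (T : H →L[ℂ] H) (k : ℕ) : singularValue T k ≤ ‖T‖ := by
  simpa using singularValue_le_norm_sub (T := T) (rankLE_zero k)

lemma singularValue_antitone (T : H →L[ℂ] H) : Antitone (singularValue T) := by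
  intro k l hkl
  refine le_csInf ⟨_, 0, rankLE_zero k, rfl⟩ ?_
  rintro _ ⟨F, hF, rfl⟩
  exact singularValue_le_norm_sub (RankLE.mono hF hkl)

lemma singularValue_add_le_of_rankLE {T G : H →L[ℂ] H} {k l : ℕ} (hG : RankLE l G) :
    singularValue T (k + l) ≤ singularValue (T - G) k := by
  refine le_csInf ⟨_, 0, rankLE_zero k, rfl⟩ ?_
  rintro _ ⟨F, hF, rfl⟩
  rw [sub_sub, add_comm G]
  exact singularValue_le_norm_sub (RankLE.add hF hG)

lemma memSchatten_of_singularValue_eq_zero {T : H →L[ℂ] H} {k : ℕ} (hk : singularValue T k = 0)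
    {r : ℝ} (hr : 0 < r) : MemSchatten r T := by
  refine summable_of_ne_finset_zero (s := Finset.range k) fun l hl => ?_
  have hkl : k ≤ l := by simpa using hl
  have := (singularValue_antitone T hkl).trans hk.le
  rw [le_antisymm this (singularValue_nonneg T l), Real.zero_rpow hr.ne']

end SingularValue

section HilbertSchmidt

variable {H : Type*} [NormedAddCommGroup H] [InnerProductSpace ℂ H] {ι : Type*}

lemma HilbertBasis.hasSum_norm_inner_sq (b : HilbertBasis ι ℂ H) (f : H) :
    HasSum (fun i => ‖⟪b i, f⟫_ℂ‖ ^ 2) (‖f‖ ^ 2) := by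
  simpa [b.repr_apply_apply] using lp.hasSum_norm (p := 2) (by norm_num) (b.repr f)

lemma HilbertBasis.hasSum_norm_sub_smulRight_sq (b : HilbertBasis ι ℂ H) {A : H →L[ℂ] H}
    (hA : Summable fun i => ‖A (b i)‖ ^ 2) {f : H} (hf : ‖f‖ = 1) :
    HasSum (fun i => ‖(A - (innerSL ℂ f).smulRight (A f)) (b i)‖ ^ 2)
      (∑' i, ‖A (b i)‖ ^ 2 - ‖A f‖ ^ 2) := by
  set g := A f
  have hcross : HasSum (fun i => RCLike.re ⟪A (b i), ⟪f, b i⟫_ℂ • g⟫_ℂ) (‖g‖ ^ 2) := by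
    have h := RCLike.hasSum_re ℂ ((b.hasSum_repr f).mapL ((innerSL ℂ g).comp A))
    rw [ContinuousLinearMap.comp_apply, innerSL_apply_apply, inner_self_eq_norm_sq_to_K] at h
    norm_cast at h
    refine h.congr_fun fun i => ?_
    rw [ContinuousLinearMap.comp_apply, innerSL_apply_apply, map_smul, inner_smul_right,
      inner_smul_right, b.repr_apply_apply, ← RCLike.conj_re (⟪b i, f⟫_ℂ * _),
      map_mul (starRingEnd ℂ), inner_conj_symm, inner_conj_symm]
  have hsmul : HasSum (fun i => ‖⟪f, b i⟫_ℂ • g‖ ^ 2) (‖g‖ ^ 2) := by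
    have h := (b.hasSum_norm_inner_sq f).mul_right (‖g‖ ^ 2)
    rw [hf, one_pow, one_mul] at h
    exact h.congr_fun fun i => by rw [norm_smul, mul_pow, norm_inner_symm]
  rw [show ∑' i, ‖A (b i)‖ ^ 2 - ‖g‖ ^ 2 = ∑' i, ‖A (b i)‖ ^ 2 - 2 * ‖g‖ ^ 2 + ‖g‖ ^ 2 by ring]
  refine ((hA.hasSum.sub (hcross.mul_left 2)).add hsmul).congr_fun fun i => ?_
  rw [sub_apply, ContinuousLinearMap.smulRight_apply, innerSL_apply_apply, norm_sub_sq (𝕜 := ℂ)]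

lemma HilbertBasis.norm_apply_sq_le_tsum (b : HilbertBasis ι ℂ H) {A : H →L[ℂ] H}
    (hA : Summable fun i => ‖A (b i)‖ ^ 2) {f : H} (hf : ‖f‖ = 1) :
    ‖A f‖ ^ 2 ≤ ∑' i, ‖A (b i)‖ ^ 2 :=
  sub_nonneg.1 ((b.hasSum_norm_sub_smulRight_sq hA hf).nonneg fun _ => sq_nonneg _)

lemma ContinuousLinearMap.opNorm_sq_le_of_unit_norm {A : H →L[ℂ] H} {c : ℝ} (hc : 0 ≤ c)
    (h : ∀ f, ‖f‖ = 1 → ‖A f‖ ^ 2 ≤ c) : ‖A‖ ^ 2 ≤ c :=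
  (Real.le_sqrt (norm_nonneg _) hc).1 <|
    A.opNorm_le_of_unit_norm (Real.sqrt_nonneg c) fun f hf =>
      (Real.le_sqrt (norm_nonneg _) hc).2 (h f hf)

theorem HilbertBasis.singularValue_sq_mul_succ_le_tsum (b : HilbertBasis ι ℂ H) (k : ℕ)
    {A : H →L[ℂ] H} (hA : Summable fun i => ‖A (b i)‖ ^ 2) :
    singularValue A k ^ 2 * (k + 1) ≤ ∑' i, ‖A (b i)‖ ^ 2 := by
  induction k generalizing A with
  | zero =>
    simpa using (pow_le_pow_left₀ (singularValue_nonneg A 0) (singularValue_le_norm A 0) 2).trans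
      (ContinuousLinearMap.opNorm_sq_le_of_unit_norm (tsum_nonneg fun _ => sq_nonneg _)
        fun f hf => b.norm_apply_sq_le_tsum hA hf)
  | succ k ih =>
    set s := singularValue A (k + 1)
    -- Peeling off `x ↦ ⟪f, x⟫ • A f` for every unit `f` bounds `‖A‖ ^ 2` by
    -- `∑ ‖A bᵢ‖ ^ 2 - (k + 1) s ^ 2`, and `s ≤ ‖A‖`.
    have hdeflate : ∀ f, ‖f‖ = 1 → ‖A f‖ ^ 2 ≤ ∑' i, ‖A (b i)‖ ^ 2 - s ^ 2 * (k + 1) := by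
      intro f hf
      have hD := b.hasSum_norm_sub_smulRight_sq hA hf
      have hs : s ≤ singularValue (A - (innerSL ℂ f).smulRight (A f)) k :=
        singularValue_add_le_of_rankLE (rankLE_one_smulRight f (A f))
      have := ih hD.summable
      rw [hD.tsum_eq] at this
      nlinarith [pow_le_pow_left₀ (singularValue_nonneg A _) hs 2]
    have hs0 : s ^ 2 * (k + 1) ≤ ∑' i, ‖A (b i)‖ ^ 2 :=
      le_trans (by gcongr; exacts [singularValue_nonneg A _, singularValue_antitone A k.le_succ])
        (ih hA)
    have hnorm := ContinuousLinearMap.opNorm_sq_le_of_unit_norm (sub_nonneg.2 hs0) hdeflate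
    have hsA := pow_le_pow_left₀ (singularValue_nonneg A _) (singularValue_le_norm A (k + 1)) 2
    push_cast
    linarith

theorem HilbertBasis.singularValue_add_card_sq_mul_succ_le (b : HilbertBasis ι ℂ H)
    (T : H →L[ℂ] H) (S : Finset ι) {g : ι → ℝ} (hg : Summable g) (hg0 : ∀ i, 0 ≤ g i)
    (hTg : ∀ i ∉ S, ‖T (b i)‖ ^ 2 ≤ g i) (j : ℕ) :
    singularValue T (j + S.card) ^ 2 * (j + 1) ≤ ∑' i, g i := by
  classical
  set F := ∑ i ∈ S, (innerSL ℂ (b i)).smulRight (T (b i))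
  have hF : RankLE S.card F := rankLE_card_sum S _ fun i _ => rankLE_one_smulRight _ _
  have hcol : ∀ i, (T - F) (b i) = if i ∈ S then 0 else T (b i) := by
    intro i
    simp only [F, sub_apply, sum_apply, ContinuousLinearMap.smulRight_apply, innerSL_apply_apply,
      orthonormal_iff_ite.1 b.orthonormal, ite_smul, one_smul, zero_smul,
      Finset.sum_ite_eq' S i fun ν => T (b ν)]
    split_ifs <;> simp
  have hle : ∀ i, ‖(T - F) (b i)‖ ^ 2 ≤ g i := by
    intro i
    rw [hcol]
    split_ifs with hi
    · simpa using hg0 i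
    · exact hTg i hi
  have hsum := Summable.of_nonneg_of_le (fun _ => sq_nonneg _) hle hg
  calc singularValue T (j + S.card) ^ 2 * (j + 1)
      ≤ singularValue (T - F) j ^ 2 * (j + 1) := by
        gcongr
        exacts [singularValue_nonneg T _, singularValue_add_le_of_rankLE hF]
    _ ≤ ∑' i, ‖(T - F) (b i)‖ ^ 2 := b.singularValue_sq_mul_succ_le_tsum j hsum
    _ ≤ ∑' i, g i := hsum.tsum_le_tsum hle hg

theorem HilbertBasis.singularValue_card_eq_zero [Fintype ι] (b : HilbertBasis ι ℂ H)
    (T : H →L[ℂ] H) : singularValue T (Fintype.card ι) = 0 := by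
  have := b.singularValue_add_card_sq_mul_succ_le T Finset.univ summable_zero (fun _ => le_rfl)
    (by simp) 0
  simp only [zero_add, Finset.card_univ, Nat.cast_zero, mul_one, tsum_zero] at this
  exact pow_eq_zero_iff two_ne_zero |>.1 (le_antisymm this (sq_nonneg _))

end HilbertSchmidt

def multiIndexBall (n N : ℕ) : Finset (Fin n → ℕ) :=
  {ν ∈ Fintype.piFinset fun _ => Finset.range N | ∑ i, ν i < N}

lemma mem_multiIndexBall {n N : ℕ} {ν : Fin n → ℕ} :
    ν ∈ multiIndexBall n N ↔ ∑ i, ν i < N := by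
  simp only [multiIndexBall, Finset.mem_filter, Fintype.mem_piFinset, Finset.mem_range,
    and_iff_right_iff_imp]
  exact fun h i => (Finset.single_le_sum (fun j _ => Nat.zero_le _) (Finset.mem_univ i)).trans_lt h

lemma card_multiIndexBall_le (n N : ℕ) : (multiIndexBall n N).card ≤ N ^ n :=
  (Finset.card_filter_le _ _).trans_eq (by simp)

section WeightedHilbertSchmidt

variable {H : Type*} [NormedAddCommGroup H] [InnerProductSpace ℂ H] {n : ℕ}

theorem HilbertBasis.singularValue_add_pow_sq_mul_succ_le (b : HilbertBasis (Fin n → ℕ) ℂ H)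
    (T : H →L[ℂ] H) {σ : ℝ} (hσ : 0 ≤ σ)
    (hT : Summable fun ν : Fin n → ℕ => (∑ i, (ν i : ℝ)) ^ (2 * σ) * ‖T (b ν)‖ ^ 2)
    {N : ℕ} (hN : 0 < N) (j : ℕ) :
    singularValue T (j + N ^ n) ^ 2 * (j + 1) ≤
      (N : ℝ) ^ (-(2 * σ)) * ∑' ν, (∑ i, (ν i : ℝ)) ^ (2 * σ) * ‖T (b ν)‖ ^ 2 := by
  rw [← tsum_mul_left]
  calc singularValue T (j + N ^ n) ^ 2 * (j + 1)
      ≤ singularValue T (j + (multiIndexBall n N).card) ^ 2 * (j + 1) := by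
        gcongr
        exacts [singularValue_nonneg T _, singularValue_antitone T
          (Nat.add_le_add_left (card_multiIndexBall_le n N) j)]
    _ ≤ _ := by
      refine b.singularValue_add_card_sq_mul_succ_le T _ (hT.mul_left _) (fun ν => by positivity)
        (fun ν hν => ?_) j
      have hNν : (N : ℝ) ≤ ∑ i, (ν i : ℝ) := by
        exact_mod_cast not_lt.1 (mt mem_multiIndexBall.2 hν)
      calc ‖T (b ν)‖ ^ 2 = (N : ℝ) ^ (-(2 * σ)) * ((N : ℝ) ^ (2 * σ) * ‖T (b ν)‖ ^ 2) := by
            rw [← mul_assoc, ← Real.rpow_add (by positivity), neg_add_cancel, Real.rpow_zero,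
              one_mul]
        _ ≤ _ := by gcongr

theorem HilbertBasis.singularValue_two_mul_pow_sq_le (b : HilbertBasis (Fin n → ℕ) ℂ H)
    (T : H →L[ℂ] H) {σ : ℝ} (hσ : 0 ≤ σ)
    (hT : Summable fun ν : Fin n → ℕ => (∑ i, (ν i : ℝ)) ^ (2 * σ) * ‖T (b ν)‖ ^ 2) (q : ℕ) :
    singularValue T (2 * (2 ^ n) ^ q) ^ 2 ≤
      (∑' ν, (∑ i, (ν i : ℝ)) ^ (2 * σ) * ‖T (b ν)‖ ^ 2) * ((2 : ℝ) ^ (-(2 * σ + n))) ^ q := by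
  have h := b.singularValue_add_pow_sq_mul_succ_le T hσ hT (pow_pos two_pos q) ((2 ^ n) ^ q)
  rw [show (2 ^ n) ^ q + (2 ^ q) ^ n = 2 * (2 ^ n) ^ q by rw [← pow_mul, ← pow_mul, mul_comm]; ring]
    at h
  have hθ : ((2 : ℝ) ^ (-(2 * σ + n))) ^ q * (2 ^ n) ^ q = ((2 ^ q : ℕ) : ℝ) ^ (-(2 * σ)) := by
    rw [← mul_pow, ← Real.rpow_natCast 2 n, ← Real.rpow_add two_pos, Nat.cast_pow,
      Nat.cast_ofNat, Real.rpow_pow_comm zero_le_two]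
    ring_nf
  refine le_of_mul_le_mul_right ?_ (by positivity : (0 : ℝ) < (2 ^ n) ^ q)
  rw [mul_assoc, hθ, mul_comm _ (((2 ^ q : ℕ) : ℝ) ^ _)]
  refine le_trans ?_ h
  gcongr
  push_cast
  linarith

end WeightedHilbertSchmidt

theorem summable_rpow_of_sq_le_geometric {s : ℕ → ℝ} (hs0 : ∀ k, 0 ≤ s k) (hs : Antitone s)
    {ρ : ℕ} (hρ : 2 ≤ ρ) {r M θ : ℝ} (hr : 0 < r) (hθ : 0 ≤ θ) (hρθ : ρ * θ ^ (r / 2) < 1)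
    (h : ∀ q : ℕ, s (2 * ρ ^ q) ^ 2 ≤ M * θ ^ q) :
    Summable fun k => s k ^ r := by
  have hM : 0 ≤ M := by simpa using (sq_nonneg _).trans (h 0)
  have hsr : ∀ k, s k ^ r = (s k ^ 2) ^ (r / 2) := fun k => by
    rw [← Real.rpow_natCast, ← Real.rpow_mul (hs0 k)]
    ring_nf
  rw [← summable_schlomilch_iff_of_nonneg (u := fun q => 2 * ρ ^ q) (C := ρ)
    (fun k => Real.rpow_nonneg (hs0 k) r)
    (fun k l _ hkl => Real.rpow_le_rpow (hs0 l) (hs hkl) hr.le)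
    (fun q => by positivity)
    (fun q q' hqq' => Nat.mul_lt_mul_of_pos_left (Nat.pow_lt_pow_right hρ hqq') two_pos)
    (by omega) (fun q => by rw [smul_eq_mul, Nat.mul_sub]; ring_nf; rfl)]
  refine Summable.of_nonneg_of_le (fun q => ?_) (fun q => ?_)
    ((summable_geometric_of_lt_one (by positivity) hρθ).mul_left (2 * ρ * M ^ (r / 2)))
  · exact mul_nonneg (sub_nonneg.2 (by gcongr <;> omega)) (Real.rpow_nonneg (hs0 _) r)
  · calc ((2 * ρ ^ (q + 1) : ℕ) - ((2 * ρ ^ q : ℕ) : ℝ)) * s (2 * ρ ^ q) ^ r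
        ≤ (2 * ρ * ρ ^ q) * (M * θ ^ q) ^ (r / 2) := by
          rw [hsr]
          refine mul_le_mul ?_ (Real.rpow_le_rpow (sq_nonneg _) (h q) (by positivity))
            (by positivity) (by positivity)
          push_cast
          rw [pow_succ]
          nlinarith [pow_nonneg (Nat.cast_nonneg (α := ℝ) ρ) q]
      _ = 2 * ρ * M ^ (r / 2) * (ρ * θ ^ (r / 2)) ^ q := by
          rw [Real.mul_rpow hM (by positivity), ← Real.rpow_pow_comm hθ, mul_pow]
          ring

lemma two_pow_mul_rpow_lt_one {n : ℕ} {r σ : ℝ} (hr : 0 < r) (hσ : n * (1 / r - 1 / 2) < σ) :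
    ((2 ^ n : ℕ) : ℝ) * ((2 : ℝ) ^ (-(2 * σ + n))) ^ (r / 2) < 1 := by
  have hexp : (n : ℝ) - (2 * σ + n) * (r / 2) < 0 := by
    have : (n : ℝ) * (1 / r - 1 / 2) * r = n - n * (r / 2) := by field_simp
    nlinarith
  calc ((2 ^ n : ℕ) : ℝ) * ((2 : ℝ) ^ (-(2 * σ + n))) ^ (r / 2)
      = (2 : ℝ) ^ ((n : ℝ) - (2 * σ + n) * (r / 2)) := by
        rw [← Real.rpow_mul zero_le_two, Nat.cast_pow, Nat.cast_ofNat, ← Real.rpow_natCast,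
          ← Real.rpow_add two_pos]
        ring_nf
    _ < 1 := Real.rpow_lt_one_of_one_lt_of_neg one_lt_two hexp

theorem MeasureTheory.L2.norm_sq_eq_integral_norm_sq {α E : Type*} [MeasurableSpace α]
    {μ : Measure α} [NormedAddCommGroup E] [InnerProductSpace ℂ E] (f : α →₂[μ] E) :
    ‖f‖ ^ 2 = ∫ x, ‖f x‖ ^ 2 ∂μ := by
  rw [← inner_self_eq_norm_sq (𝕜 := ℂ), L2.inner_def, ← integral_re (L2.integrable_inner f f)]
  simp_rw [inner_self_eq_norm_sq]

theorem pseudoMultiplier_memSchatten_of_lt_two_general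
    (n : ℕ) (r σ : ℝ) (hr1 : 1 < r) (hr2 : r < 2)
    (hσ : σ > n * (1 / r - 1 / 2))
    (m : EuclideanSpace ℝ (Fin n) → (Fin n → ℕ) → ℂ)
    (B : HilbertBasis (Fin n → ℕ) ℂ (L2Rn n))
    (T : L2Rn n →L[ℂ] L2Rn n)
    (hT : ∀ ν, (T (B ν) : EuclideanSpace ℝ (Fin n) → ℂ) =ᵐ[volume]
      fun x => m x ν * (hermiteFunN n ν x : ℂ))
    (hm : Summable fun ν : Fin n → ℕ =>
      (∑ j, (ν j : ℝ)) ^ (2 * σ) * ∫ x, ‖m x ν‖ ^ 2 * hermiteFunN n ν x ^ 2) :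
    MemSchatten r T := by
  have hr : 0 < r := by linarith
  rcases Nat.eq_zero_or_pos n with rfl | hn
  · let _ := Fintype.ofSubsingleton (default : Fin 0 → ℕ)
    exact memSchatten_of_singularValue_eq_zero (B.singularValue_card_eq_zero T) hr
  have hσ0 : 0 < σ := by
    have : 1 / 2 < 1 / r := by gcongr
    exact lt_of_le_of_lt (mul_nonneg (Nat.cast_nonneg n) (by linarith)) hσ
  have hTB : Summable fun ν : Fin n → ℕ => (∑ i, (ν i : ℝ)) ^ (2 * σ) * ‖T (B ν)‖ ^ 2 := by
    refine hm.congr fun ν => ?_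
    rw [L2.norm_sq_eq_integral_norm_sq]
    refine congrArg _ (integral_congr_ae ?_)
    filter_upwards [hT ν] with x hx
    rw [hx, norm_mul, Complex.norm_real, Real.norm_eq_abs, mul_pow, sq_abs]
  exact summable_rpow_of_sq_le_geometric (singularValue_nonneg T) (singularValue_antitone T)
    (Nat.le_self_pow hn.ne' 2) hr (by positivity) (two_pow_mul_rpow_lt_one hr hσ)
    (B.singularValue_two_mul_pow_sq_le T hσ0.le hTB)

/-- If `1 < r < 2` and `∑_ν |ν|^{2σ} ∫ |m(x,ν)|² φ_ν(x)² dx < ∞` for some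
`σ > n(1/r - 1/2)`, then the Hermite pseudo-multiplier `T_m ∈ S_r(L²(ℝⁿ))`. -/
theorem pseudoMultiplier_memSchatten_of_lt_two
    (n : ℕ) (r σ : ℝ) (hr1 : 1 < r) (hr2 : r < 2)
    (hσ : σ > n * (1 / r - 1 / 2))
    (m : EuclideanSpace ℝ (Fin n) → (Fin n → ℕ) → ℂ)
    (B : HilbertBasis (Fin n → ℕ) ℂ (L2Rn n))
    (hB : ∀ ν, (B ν : EuclideanSpace ℝ (Fin n) → ℂ) =ᵐ[volume]
      fun x => (hermiteFunN n ν x : ℂ))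
    (T : L2Rn n →L[ℂ] L2Rn n)
    (hT : ∀ ν, (T (B ν) : EuclideanSpace ℝ (Fin n) → ℂ) =ᵐ[volume]
      fun x => m x ν * (hermiteFunN n ν x : ℂ))
    (hm : Summable fun ν : Fin n → ℕ =>
      (∑ j, (ν j : ℝ)) ^ (2 * σ) * ∫ x, ‖m x ν‖ ^ 2 * hermiteFunN n ν x ^ 2) :
    MemSchatten r T :=
  pseudoMultiplier_memSchatten_of_lt_two_general n r σ hr1 hr2 hσ m B T hT hm
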